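/- arXiv:2506.02168 — 2 statements merged into one kernel-verified Lean document; each statement's English description precedes it below -/
import Mathlib

section
/- Monomial via derivatives of a network: if φ ∈ C^∞(ℝ) and b ∈ ℝ with φ^{(m)}(b) ≠ 0 for all m ≥ 0, then for any multi-index k ∈ ℤ_+^q and x ∈ ℝ^q, x^k = (1/φ^{(|k|)}(b)) · ∂^{|k|}/∂w^k [ φ(w·x + b) ] evaluated at w = 0, where |k| = k_1 + ⋯ + k_q. -/
/-- Monomials via derivatives of a network: if all derivatives of `φ` at `b` are
nonzero, then for any multi-index `k`, the monomial `x^k` is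
`1/φ^{(|k|)}(b)` times the corresponding mixed partial derivative of
`w ↦ φ(w·x + b)` at `w = 0` (the partial derivative being taken `k_j` times in the
`j`-th coordinate, encoded by a list `v` of coordinate directions). -/
theorem monomial_via_network_derivatives
    (q : ℕ) (φ : ℝ → ℝ) (b : ℝ)
    (hφ : ContDiff ℝ (⊤ : ℕ∞) φ)
    (hb : ∀ m : ℕ, iteratedDeriv m φ b ≠ 0)
    (k : Fin q → ℕ) (x : Fin q → ℝ)
    (v : Fin (∑ j, k j) → Fin q)
    (hv : ∀ j : Fin q, (Finset.univ.filter fun i => v i = j).card = k j) :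
    (∏ j, x j ^ k j) =
      (1 / iteratedDeriv (∑ j, k j) φ b) *
        iteratedFDeriv ℝ (∑ j, k j)
          (fun w : Fin q → ℝ => φ ((∑ j, w j * x j) + b)) 0
          (fun i => Pi.single (v i) (1 : ℝ)) := by
  set ψ : ℝ → ℝ := fun t => φ (t + b) with hψ
  have hψc : ContDiff ℝ (⊤ : ℕ∞) ψ := hφ.comp (contDiff_id.add contDiff_const)
  -- the linear map w ↦ ∑ w j * x j
  set ℓ : (Fin q → ℝ) →L[ℝ] ℝ := ∑ j, x j • ContinuousLinearMap.proj j with hℓ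
  have hℓ_apply : ∀ w : Fin q → ℝ, ℓ w = ∑ j, w j * x j := by
    intro w
    simp [hℓ, ContinuousLinearMap.sum_apply, mul_comm]
  have hfun : (fun w : Fin q → ℝ => φ ((∑ j, w j * x j) + b)) = ψ ∘ ℓ := by
    funext w
    simp [hψ, hℓ_apply w]
  have hcomp := ℓ.iteratedFDeriv_comp_right (i := ∑ j, k j) hψc (0 : Fin q → ℝ) (by exact_mod_cast le_top)
  have hℓe : ∀ i : Fin (∑ j, k j), ℓ (Pi.single (v i) (1 : ℝ)) = x (v i) := by
    intro i
    rw [hℓ_apply]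
    rw [Finset.sum_eq_single (v i)]
    · simp
    · intro j _ hj; simp [Pi.single_apply, hj]
    · simp
  have key : iteratedFDeriv ℝ (∑ j, k j) (fun w : Fin q → ℝ => φ ((∑ j, w j * x j) + b)) 0
      (fun i => Pi.single (v i) (1 : ℝ)) = (∏ i, x (v i)) * iteratedDeriv (∑ j, k j) φ b := by
    rw [hfun, hcomp]
    rw [ContinuousMultilinearMap.compContinuousLinearMap_apply]
    have h0 : ℓ 0 = 0 := by simp
    simp only [h0, hℓe]
    rw [iteratedFDeriv_apply_eq_iteratedDeriv_mul_prod]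
    have : iteratedDeriv (∑ j, k j) ψ 0 = iteratedDeriv (∑ j, k j) φ b := by
      rw [hψ, iteratedDeriv_comp_add_const]
      simp
    rw [this]
    simp [mul_comm]
  rw [key]
  have hprod : (∏ i, x (v i)) = ∏ j, x j ^ k j := by
    rw [← Finset.prod_fiberwise_of_maps_to (fun i _ => Finset.mem_univ (v i)) (fun i => x (v i))]
    refine Finset.prod_congr rfl fun j _ => ?_
    rw [Finset.prod_congr rfl (fun i hi => by
      rw [(Finset.mem_filter.mp hi).2]), Finset.prod_const, hv]
  rw [hprod]
  field_simp [hb (∑ j, k j)]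
end

section
/- If f is in the approximation space A_γ (i.e., dist(f, Π_n) ≤ C n^{−γ} for all n ≥ 1) and σ_n satisfies ‖f − σ_n(f)‖ ≤ c · dist(f, Π_{βn}) for a fixed β ∈ (0,1], then sup_{j ≥ 0} 2^{jγ} ‖τ_j(f)‖ < ∞, where τ_0(f)=σ_1(f), τ_j(f)=σ_{2^j}(f)−σ_{2^{j−1}}(f) for j ≥ 1. -/
/-! Each dyadic block `τ_j f` is the difference of two near-best approximations of `f`, so it is
at most `2c · dist(f, Π_m)` with `m = ⌊β 2^{j-1}⌋`. Once `β 2^{j-1} ≥ 1` we have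
`m ≥ β 2^{j-1} / 2`, and the rate `dist(f, Π_m) ≤ C m^{-γ}` turns this into
`‖τ_j f‖ ≤ 2cC (4/β)^γ 2^{-jγ}`; the finitely many remaining `j` do not affect boundedness. -/

/-- Degree of approximation of `f` from the set `Pi'`. -/
noncomputable def degApprox {X : Type*} [NormedAddCommGroup X] (Pi' : Set X) (f : X) : ℝ :=
  sInf ((fun P => ‖f - P‖) '' Pi')

open Filter

lemma degApprox_nonneg {X : Type*} [NormedAddCommGroup X] (S : Set X) (f : X) :
    0 ≤ degApprox S f :=
  Real.sInf_nonneg (by rintro x ⟨P, _, rfl⟩; exact norm_nonneg _)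

lemma degApprox_anti {X : Type*} [NormedAddCommGroup X] {S T : Set X} (f : X)
    (hS : S.Nonempty) (hST : S ⊆ T) : degApprox T f ≤ degApprox S f :=
  csInf_le_csInf ⟨0, by rintro x ⟨P, _, rfl⟩; exact norm_nonneg _⟩ (hS.image _)
    (Set.image_mono hST)

lemma Real.natFloor_rpow_neg_le {x γ : ℝ} (hx : 1 ≤ x) (hγ : 0 ≤ γ) :
    (⌊x⌋₊ : ℝ) ^ (-γ) ≤ 2 ^ γ * x ^ (-γ) := by
  have hhalf : x / 2 ≤ ⌊x⌋₊ := by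
    have hlt := Nat.lt_floor_add_one x
    have hone : (1 : ℝ) ≤ ⌊x⌋₊ := by exact_mod_cast Nat.le_floor (by exact_mod_cast hx)
    linarith
  calc (⌊x⌋₊ : ℝ) ^ (-γ) ≤ (x / 2) ^ (-γ) :=
        Real.rpow_le_rpow_of_nonpos (by positivity) hhalf (neg_nonpos.2 hγ)
    _ = 2 ^ γ * x ^ (-γ) := by
        rw [Real.div_rpow (by positivity) zero_le_two, Real.rpow_neg zero_le_two]
        field_simp

lemma two_rpow_succ_mul_rpow_neg {β : ℝ} (hβ : 0 < β) (γ : ℝ) (k : ℕ) :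
    (2 : ℝ) ^ (((k + 1 : ℕ) : ℝ) * γ) * (β * 2 ^ k) ^ (-γ) = (2 / β) ^ γ := by
  rw [Real.rpow_mul zero_le_two, Real.rpow_natCast, Real.rpow_neg (by positivity),
    ← div_eq_mul_inv, ← Real.div_rpow (by positivity) (by positivity)]
  congr 1
  field_simp
  ring

section NearBest

variable {X : Type*} [NormedAddCommGroup X] {Pi' : ℕ → Set X} {σ : ℕ → X → X} {β c : ℝ}

lemma norm_nearBest_sub_le (hne : ∀ n, (Pi' n).Nonempty)
    (hmono : ∀ m n : ℕ, m ≤ n → Pi' m ⊆ Pi' n) (hβ : 0 ≤ β) (hc : 0 ≤ c)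
    (hσnear : ∀ (g : X) (n : ℕ), 1 ≤ n → ‖g - σ n g‖ ≤ c * degApprox (Pi' ⌊β * (n : ℝ)⌋₊) g)
    (f : X) {m n : ℕ} (hn : 1 ≤ n) (hnm : n ≤ m) :
    ‖σ m f - σ n f‖ ≤ 2 * c * degApprox (Pi' ⌊β * n⌋₊) f := by
  have hanti : degApprox (Pi' ⌊β * m⌋₊) f ≤ degApprox (Pi' ⌊β * n⌋₊) f :=
    degApprox_anti f (hne _) (hmono _ _ (Nat.floor_le_floor
      (mul_le_mul_of_nonneg_left (Nat.cast_le.2 hnm) hβ)))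
  calc ‖σ m f - σ n f‖ ≤ ‖f - σ m f‖ + ‖f - σ n f‖ := by
        rw [norm_sub_rev f (σ m f)]; exact norm_sub_le_norm_sub_add_norm_sub _ _ _
    _ ≤ c * degApprox (Pi' ⌊β * m⌋₊) f + c * degApprox (Pi' ⌊β * n⌋₊) f :=
        add_le_add (hσnear f m (hn.trans hnm)) (hσnear f n hn)
    _ ≤ 2 * c * degApprox (Pi' ⌊β * n⌋₊) f := by linarith [mul_le_mul_of_nonneg_left hanti hc]

lemma norm_nearBest_sub_le_rpow (hne : ∀ n, (Pi' n).Nonempty)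
    (hmono : ∀ m n : ℕ, m ≤ n → Pi' m ⊆ Pi' n) (hc : 0 ≤ c)
    (hσnear : ∀ (g : X) (n : ℕ), 1 ≤ n → ‖g - σ n g‖ ≤ c * degApprox (Pi' ⌊β * (n : ℝ)⌋₊) g)
    {γ C : ℝ} (hγ : 0 ≤ γ) {f : X}
    (hC : ∀ n : ℕ, 1 ≤ n → degApprox (Pi' n) f ≤ C * (n : ℝ) ^ (-γ))
    {m n : ℕ} (hβn : 1 ≤ β * n) (hnm : n ≤ m) :
    ‖σ m f - σ n f‖ ≤ 2 * c * C * 2 ^ γ * (β * n) ^ (-γ) := by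
  have hC0 : 0 ≤ C := by simpa using (degApprox_nonneg _ f).trans (hC 1 le_rfl)
  have hβn_pos : 0 < β * n := by linarith
  have hβ : 0 < β := pos_of_mul_pos_left hβn_pos n.cast_nonneg
  have hn : 1 ≤ n := Nat.cast_pos.1 (pos_of_mul_pos_right hβn_pos hβ.le)
  calc ‖σ m f - σ n f‖ ≤ 2 * c * degApprox (Pi' ⌊β * n⌋₊) f :=
        norm_nearBest_sub_le hne hmono hβ.le hc hσnear f hn hnm
    _ ≤ 2 * c * (C * (⌊β * n⌋₊ : ℝ) ^ (-γ)) := by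
        gcongr; exact hC _ (Nat.le_floor (by exact_mod_cast hβn))
    _ ≤ 2 * c * (C * (2 ^ γ * (β * n) ^ (-γ))) := by
        gcongr; exact Real.natFloor_rpow_neg_le hβn hγ
    _ = 2 * c * C * 2 ^ γ * (β * n) ^ (-γ) := by ring

end NearBest

theorem approx_space_tau_bounded_general
    {X : Type*} [NormedAddCommGroup X]
    (Pi' : ℕ → Set X)
    (hne : ∀ n, (Pi' n).Nonempty)
    (hmono : ∀ m n : ℕ, m ≤ n → Pi' m ⊆ Pi' n)
    (γ : ℝ) (hγ : 0 < γ) (f : X)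
    (C : ℝ) (hC : ∀ n : ℕ, 1 ≤ n → degApprox (Pi' n) f ≤ C * (n : ℝ) ^ (-γ))
    (σ : ℕ → X → X) (β c : ℝ) (hβ : 0 < β) (hc : 0 < c)
    (hσnear : ∀ (g : X) (n : ℕ), 1 ≤ n →
      ‖g - σ n g‖ ≤ c * degApprox (Pi' ⌊β * (n : ℝ)⌋₊) g)
    (τ : ℕ → X → X)
    (hτ : ∀ j : ℕ, 1 ≤ j → ∀ g, τ j g = σ (2 ^ j) g - σ (2 ^ (j - 1)) g) :
    ∃ B : ℝ, ∀ j : ℕ, (2 : ℝ) ^ ((j : ℝ) * γ) * ‖τ j f‖ ≤ B := by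
  have hlarge : ∀ᶠ k : ℕ in atTop, 1 ≤ β * (2 : ℝ) ^ k :=
    ((tendsto_pow_atTop_atTop_of_one_lt one_lt_two).const_mul_atTop hβ).eventually_ge_atTop 1
  have hbound : ∀ᶠ j : ℕ in atTop,
      (2 : ℝ) ^ ((j : ℝ) * γ) * ‖τ j f‖ ≤ 2 * c * C * 2 ^ γ * (2 / β) ^ γ := by
    rw [← map_add_atTop_eq_nat 1, eventually_map]
    filter_upwards [hlarge] with k hk
    have hstep := norm_nearBest_sub_le_rpow hne hmono hc.le hσnear hγ.le hC
      (m := 2 ^ (k + 1)) (by exact_mod_cast hk) (Nat.pow_le_pow_right two_pos k.le_succ)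
    rw [hτ (k + 1) k.succ_pos f, Nat.add_sub_cancel, ← two_rpow_succ_mul_rpow_neg hβ γ k]
    push_cast at hstep ⊢
    calc _ ≤ (2 : ℝ) ^ (((k : ℝ) + 1) * γ) * (2 * c * C * 2 ^ γ * (β * 2 ^ k) ^ (-γ)) := by
          gcongr
      _ = _ := by ring
  obtain ⟨B, hB⟩ := (isBoundedUnder_of_eventually_le hbound).bddAbove_range
  exact ⟨B, fun j => hB ⟨j, rfl⟩⟩

/-- If `f` belongs to the approximation space `A_γ` (i.e. `dist(f,Π_n) ≤ C n^{−γ}`)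
and `σ_n` are near-best approximation operators (`‖f − σ_n f‖ ≤ c · dist(f, Π_{βn})`),
then `sup_j 2^{jγ} ‖τ_j f‖ < ∞` for the telescoping operators `τ_j`. -/
theorem approx_space_tau_bounded
    {X : Type*} [NormedAddCommGroup X] [NormedSpace ℝ X]
    (Pi' : ℕ → Set X)
    (hne : ∀ n, (Pi' n).Nonempty)
    (hmono : ∀ m n : ℕ, m ≤ n → Pi' m ⊆ Pi' n)
    (γ : ℝ) (hγ : 0 < γ) (f : X)
    (C : ℝ) (hC : ∀ n : ℕ, 1 ≤ n → degApprox (Pi' n) f ≤ C * (n : ℝ) ^ (-γ))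
    (σ : ℕ → X → X) (β c : ℝ) (hβ : 0 < β) (hβ1 : β ≤ 1) (hc : 0 < c)
    (hσmem : ∀ n g, σ n g ∈ Pi' n)
    (hσnear : ∀ (g : X) (n : ℕ), 1 ≤ n →
      ‖g - σ n g‖ ≤ c * degApprox (Pi' ⌊β * (n : ℝ)⌋₊) g)
    (τ : ℕ → X → X)
    (hτ0 : ∀ g, τ 0 g = σ 1 g)
    (hτ : ∀ j : ℕ, 1 ≤ j → ∀ g, τ j g = σ (2 ^ j) g - σ (2 ^ (j - 1)) g) :
    ∃ B : ℝ, ∀ j : ℕ, (2 : ℝ) ^ ((j : ℝ) * γ) * ‖τ j f‖ ≤ B :=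
  approx_space_tau_bounded_general Pi' hne hmono γ hγ f C hC σ β c hβ hc hσnear τ hτ
end
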